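/- Let $f:\mathbb{Z}_{\ge 1}\to\mathbb{Z}_{\ge 1}$ be non-decreasing with $f(n)\to\infty$. Let $(a_n)_{n\ge 1}$ be a bounded real sequence such that for every $\varepsilon>0$ there exists $n_0(\varepsilon)$ so that for all $n\ge n_0$ and all $m\ge f(n)$ one has $a_{n+m}\le (1+\varepsilon)a_n$. Then $\lim_{n\to\infty} a_n$ exists. -/
import Mathlib


/-- If `f : ℕ → ℕ` is non-decreasing with `f n → ∞`, `(a n)` is a bounded
real sequence, and for every `ε > 0` there is `n₀` so that for all `n ≥ n₀` and
`m ≥ f n` one has `a (n+m) ≤ (1+ε) * a n`, then `a` converges. -/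
theorem almost_monotone_bounded_limit_exists
    (f : ℕ → ℕ) (hf_mono : Monotone f) (hf_pos : ∀ n, 1 ≤ f n)
    (hf_top : Filter.Tendsto f Filter.atTop Filter.atTop)
    (a : ℕ → ℝ) (hbdd : ∃ M : ℝ, ∀ n, |a n| ≤ M)
    (h : ∀ ε : ℝ, 0 < ε → ∃ n0 : ℕ, ∀ n ≥ n0, ∀ m ≥ f n, a (n + m) ≤ (1 + ε) * a n) :
    ∃ L : ℝ, Filter.Tendsto a Filter.atTop (nhds L) := by
  obtain ⟨M, hM⟩ := hbdd
  have hM0 : 0 ≤ M := (abs_nonneg _).trans (hM 0)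
  have hub : Filter.IsBoundedUnder (· ≤ ·) Filter.atTop a :=
    ⟨M, Filter.eventually_map.2 (Filter.Eventually.of_forall fun n => (abs_le.1 (hM n)).2)⟩
  have hlb : Filter.IsBoundedUnder (· ≥ ·) Filter.atTop a :=
    ⟨-M, Filter.eventually_map.2 (Filter.Eventually.of_forall fun n => (abs_le.1 (hM n)).1)⟩
  set S := Filter.limsup a Filter.atTop with hS
  set I := Filter.liminf a Filter.atTop with hI
  have hco_le : Filter.IsCoboundedUnder (· ≤ ·) Filter.atTop a := hlb.isCoboundedUnder_le
  have hco_ge : Filter.IsCoboundedUnder (· ≥ ·) Filter.atTop a := hub.isCoboundedUnder_ge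
  have hIS : I ≤ S := Filter.liminf_le_limsup hub hlb
  have hSM : S ≤ M :=
    Filter.limsup_le_of_le hco_le (Filter.Eventually.of_forall fun n => (abs_le.1 (hM n)).2)
  have hIM : I ≤ M := hIS.trans hSM
  have key : ∀ ε : ℝ, 0 < ε → S ≤ (1 + ε) * I := by
    intro ε hε
    obtain ⟨n0, hn0⟩ := h ε hε
    have h1 : ∀ n ≥ n0, S ≤ (1 + ε) * a n := by
      intro n hn
      apply Filter.limsup_le_of_le hco_le
      filter_upwards [Filter.eventually_ge_atTop (n + f n)] with k hk
      have := hn0 n hn (k - n) (by omega)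
      rwa [show n + (k - n) = k by omega] at this
    have h2 : S / (1 + ε) ≤ I := by
      apply Filter.le_liminf_of_le hco_ge
      filter_upwards [Filter.eventually_ge_atTop n0] with n hn
      rw [div_le_iff₀ (by linarith)]
      calc S ≤ (1 + ε) * a n := h1 n hn
        _ = a n * (1 + ε) := mul_comm _ _
    calc S = S / (1 + ε) * (1 + ε) := by field_simp
      _ ≤ I * (1 + ε) := mul_le_mul_of_nonneg_right h2 (by linarith)
      _ = (1 + ε) * I := mul_comm _ _
  have hSI : S ≤ I := by
    apply le_of_forall_pos_le_add
    intro ε hε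
    have hε' : 0 < ε / (M + 1) := by positivity
    calc S ≤ (1 + ε / (M + 1)) * I := key _ hε'
      _ = I + (ε / (M + 1)) * I := by ring
      _ ≤ I + (ε / (M + 1)) * (M + 1) := by
          gcongr
          linarith
      _ = I + ε := by field_simp
  exact ⟨S, tendsto_of_liminf_eq_limsup (le_antisymm hIS hSI) rfl hub hlb⟩
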